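/- arXiv:1603.03661 — 3 statements merged into one kernel-verified Lean document; each statement's English description precedes it below -/
import Mathlib

section
/- Let X be a weakly non-commutative Corson countably compact space. Then the following are equivalent: (1) X is non-commutative Corson (i.e., X admits a full retractional skeleton); (2) X is a Fréchet–Urysohn space; (3) X has countable tightness (for every A ⊆ X and every x in the closure of A there is a countable C ⊆ A with x in the closure of C). -/
open Filter Topology Set

universe u

section Defs

/-- A space is countably compact if every countable open cover has a finite subcover. -/
def CountablyCompact (X : Type u) [TopologicalSpace X] : Prop :=
  ∀ U : ℕ → Set X, (∀ n, IsOpen (U n)) → (⋃ n, U n) = Set.univ →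
    ∃ t : Finset ℕ, (⋃ n ∈ t, U n) = Set.univ

variable {X : Type u} [TopologicalSpace X]

/-- A retractional skeleton on a topological space `X`. -/
structure IsRetractionalSkeleton {Γ : Type u} [PartialOrder Γ] (r : Γ → X → X) : Prop where
  nonempty : Nonempty Γ
  directed : ∀ s t : Γ, ∃ w, s ≤ w ∧ t ≤ w
  continuous : ∀ s, Continuous (r s)
  retraction : ∀ s, r s ∘ r s = r s
  compact_range : ∀ s, IsCompact (Set.range (r s))
  metrizable_range : ∀ s, TopologicalSpace.MetrizableSpace (Set.range (r s))
  comp_eq_of_le : ∀ s t, s ≤ t → r t ∘ r s = r s ∧ r s ∘ r t = r s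
  seq_sup : ∀ u : ℕ → Γ, Monotone u →
    ∃ t, IsLUB (Set.range u) t ∧
      ∀ x, Filter.Tendsto (fun n => r (u n) x) Filter.atTop (nhds (r t x))
  tendsto_id : ∀ x, Filter.Tendsto (fun s => r s x) Filter.atTop (nhds x)

/-- `X` admits a retractional skeleton (non-commutative Valdivia when `X` is compact). -/
def HasRetractionalSkeleton (X : Type u) [TopologicalSpace X] : Prop :=
  ∃ (Γ : Type u) (_ : PartialOrder Γ) (r : Γ → X → X), IsRetractionalSkeleton r

/-- `X` admits a full retractional skeleton. -/
def HasFullRetractionalSkeleton (X : Type u) [TopologicalSpace X] : Prop :=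
  ∃ (Γ : Type u) (_ : PartialOrder Γ) (r : Γ → X → X),
    IsRetractionalSkeleton r ∧ ∀ x : X, ∃ s, x ∈ Set.range (r s)

/-- A non-commutative Corson countably compact space. -/
def IsNCCorson (X : Type u) [TopologicalSpace X] : Prop :=
  CountablyCompact X ∧ HasFullRetractionalSkeleton X

/-- A weakly non-commutative Corson countably compact space: a countably compact
continuous image of a non-commutative Corson countably compact space. -/
def IsWeaklyNCCorson (Y : Type u) [TopologicalSpace Y] : Prop :=
  CountablyCompact Y ∧
  ∃ (X : Type u) (_ : TopologicalSpace X) (_ : T2Space X) (_ : CompletelyRegularSpace X),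
    IsNCCorson X ∧ ∃ f : X → Y, Continuous f ∧ Function.Surjective f

/-- A weakly non-commutative Valdivia compact space: a compact space with a dense
countably compact subspace which is weakly non-commutative Corson. -/
def IsWeaklyNCValdivia (K : Type u) [TopologicalSpace K] : Prop :=
  CompactSpace K ∧ ∃ D : Set K, Dense D ∧ IsWeaklyNCCorson ↥D

end Defs

/-!
Closing off under countably many steps of a full retractional skeleton `(r_s)` and passing to the
supremum yields, for every set `A` and index `s₀`, some `t ≥ s₀` and a countable `C ⊆ A` with
`r_t[A] ⊆ closure C`. This gives countable tightness at once. Applied to the product skeleton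
`(r_s × r_s)` and the closed set `{(w, w') | g w = g w'}` it shows that the indices whose
retractions respect the fibres of the map `g : W → X` are cofinal, and they are closed under
suprema of chains; when `g` is closed these retractions descend to a full skeleton on `X`. If `X`
is Fréchet–Urysohn then `g` is closed, because `W` is countably compact. Conversely, every
countable subset of `X` lies in a compact metrizable image `g[r_t[W]]`, so countable tightness
makes `X` Fréchet–Urysohn.
-/

open TopologicalSpace

def HasCountableTightness (X : Type*) [TopologicalSpace X] : Prop :=
  ∀ A : Set X, ∀ x ∈ closure A, ∃ C ⊆ A, C.Countable ∧ x ∈ closure C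

theorem FrechetUrysohnSpace.hasCountableTightness {X : Type*} [TopologicalSpace X]
    [FrechetUrysohnSpace X] : HasCountableTightness X := by
  intro A x hx
  obtain ⟨u, huA, hu⟩ := mem_closure_iff_seq_limit.1 hx
  exact ⟨range u, range_subset_iff.2 huA, countable_range u,
    mem_closure_of_tendsto hu (Eventually.of_forall mem_range_self)⟩

theorem HasCountableTightness.frechetUrysohnSpace {X : Type*} [TopologicalSpace X] [T2Space X]
    (h : HasCountableTightness X)
    (hK : ∀ C : Set X, C.Countable → ∃ K, C ⊆ K ∧ IsCompact K ∧ MetrizableSpace K) :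
    FrechetUrysohnSpace X := by
  refine ⟨fun A x hx => ?_⟩
  obtain ⟨C, hCA, hCc, hxC⟩ := h A x hx
  obtain ⟨K, hCK, hKc, hKm⟩ := hK C hCc
  have hxK : x ∈ K := closure_minimal hCK hKc.isClosed hxC
  have hxC' : (⟨x, hxK⟩ : K) ∈ closure (Subtype.val ⁻¹' C) := by
    rwa [closure_subtype, Subtype.image_preimage_coe, inter_eq_self_of_subset_right hCK]
  obtain ⟨u, huC, hu⟩ := mem_closure_iff_seq_limit.1 hxC'
  exact ⟨fun n => u n, fun n => hCA (huC n), (continuous_subtype_val.tendsto _).comp hu⟩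

theorem exists_countable_subset_image_subset_closure_image {Y Z : Type*} [TopologicalSpace Z]
    {f : Y → Z} [SecondCountableTopology (range f)] (A : Set Y) :
    ∃ C ⊆ A, C.Countable ∧ f '' A ⊆ closure (f '' C) := by
  have : SecondCountableTopology (f '' A) :=
    (IsEmbedding.inclusion (image_subset_range f A)).isInducing.secondCountableTopology
  obtain ⟨D, hDc, hD⟩ := exists_countable_dense (f '' A)
  choose a haA hfa using fun d : D => (d : f '' A).2
  have : Countable D := hDc.to_subtype
  refine ⟨range a, range_subset_iff.2 haA, countable_range a,
    (Subtype.dense_iff.1 hD).trans (closure_mono ?_)⟩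
  rintro _ ⟨d, hd, rfl⟩
  exact ⟨a ⟨d, hd⟩, mem_range_self _, hfa _⟩

theorem Continuous.secondCountableTopology_of_surjective {K Z : Type*} [TopologicalSpace K]
    [TopologicalSpace Z] [CompactSpace K] [SecondCountableTopology K] [T2Space Z] {f : K → Z}
    (hf : Continuous f) (hfs : Function.Surjective f) : SecondCountableTopology Z := by
  set b := countableBasis K
  have hb := isBasis_countableBasis K
  refine IsTopologicalBasis.secondCountableTopology
    (b := (fun F => (f '' (⋃₀ F)ᶜ)ᶜ) '' {F | F.Finite ∧ F ⊆ b})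
    (isTopologicalBasis_of_isOpen_of_nhds ?_ ?_)
    ((countable_ofPred_finite_subset (countable_countableBasis K)).image _)
  · rintro _ ⟨F, ⟨-, hFb⟩, rfl⟩
    exact (((isOpen_sUnion fun u hu => hb.isOpen (hFb hu)).isClosed_compl.isCompact.image
      hf).isClosed).isOpen_compl
  intro z V hzV hV
  have hfib : f ⁻¹' {z} ⊆ ⋃ u ∈ {u ∈ b | u ⊆ f ⁻¹' V}, u := by
    intro k hk
    obtain ⟨u, hub, hku, huV⟩ := hb.exists_subset_of_mem_open
      (by rwa [mem_preimage, show f k = z from hk]) (hV.preimage hf)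
    exact mem_biUnion ⟨hub, huV⟩ hku
  obtain ⟨F, hFb, hFfin, hF⟩ :=
    (isClosed_singleton.preimage hf).isCompact.elim_finite_subcover_image
      (fun u hu => hb.isOpen hu.1) hfib
  refine ⟨_, ⟨F, ⟨hFfin, fun u hu => (hFb hu).1⟩, rfl⟩, ?_, ?_⟩
  · rintro ⟨k, hk, rfl⟩
    exact hk (by simpa only [sUnion_eq_biUnion] using hF rfl)
  · intro y hy
    obtain ⟨k, rfl⟩ := hfs y
    by_contra hkV
    refine hy ⟨k, fun ⟨u, huF, hku⟩ => hkV ((hFb huF).2 hku), rfl⟩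

theorem IsCompact.metrizableSpace_image {W Z : Type*} [TopologicalSpace W] [TopologicalSpace Z]
    [T2Space Z] {E : Set W} (hE : IsCompact E) [MetrizableSpace E] {g : W → Z}
    (hg : Continuous g) : MetrizableSpace (g '' E) := by
  have : CompactSpace E := isCompact_iff_compactSpace.1 hE
  have : CompactSpace (g '' E) := isCompact_iff_compactSpace.1 (hE.image hg)
  let := metrizableSpaceMetric E
  have := ((hg.comp continuous_subtype_val).subtype_mk _).secondCountableTopology_of_surjective
    (imageFactorization_surjective (f := g) (s := E))
  exact metrizableSpace_of_t3_secondCountable _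

theorem CountablyCompact.exists_mapClusterPt {W : Type u} [TopologicalSpace W]
    (h : CountablyCompact W) (u : ℕ → W) : ∃ z, MapClusterPt z atTop u := by
  by_contra! hu
  simp only [mapClusterPt_atTop_iff_forall_mem_closure, not_forall] at hu
  choose i hi using hu
  obtain ⟨T, hT⟩ := h (fun n => (closure (u '' Ici n))ᶜ) (fun n => isClosed_closure.isOpen_compl)
    (eq_univ_of_forall fun z => mem_iUnion.2 ⟨i z, hi z⟩)
  obtain ⟨n, hn, hun⟩ := mem_iUnion₂.1 (hT ▸ mem_univ (u (T.sup id)))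
  exact hun (subset_closure ⟨T.sup id, Finset.le_sup (f := id) hn, rfl⟩)

theorem CountablyCompact.isClosedMap {W : Type u} {X : Type*} [TopologicalSpace W]
    [TopologicalSpace X] [T2Space X] [SequentialSpace X] (h : CountablyCompact W) {g : W → X}
    (hg : Continuous g) : IsClosedMap g := by
  intro F hF
  refine IsSeqClosed.isClosed fun y p hy hp => ?_
  choose w hwF hwy using hy
  obtain ⟨z, hz⟩ := h.exists_mapClusterPt w
  have hgz : MapClusterPt (g z) atTop y := by
    simpa only [Function.comp_def, hwy] using hz.continuousAt_comp hg.continuousAt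
  exact ⟨z, hF.mem_of_mapClusterPt hz (Eventually.of_forall hwF),
    eq_of_nhds_neBot (hgz.clusterPt.mono hp)⟩

namespace IsRetractionalSkeleton

variable {Y : Type u} [TopologicalSpace Y] {Γ : Type u} [PartialOrder Γ] {r : Γ → Y → Y}

theorem apply_apply (hr : IsRetractionalSkeleton r) (s : Γ) (y : Y) : r s (r s y) = r s y :=
  congrFun (hr.retraction s) y

theorem apply_apply_of_le (hr : IsRetractionalSkeleton r) {s t : Γ} (h : s ≤ t) (y : Y) :
    r t (r s y) = r s y :=
  congrFun (hr.comp_eq_of_le s t h).1 y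

theorem apply_apply_of_le' (hr : IsRetractionalSkeleton r) {s t : Γ} (h : s ≤ t) (y : Y) :
    r s (r t y) = r s y :=
  congrFun (hr.comp_eq_of_le s t h).2 y

theorem mem_range_iff (hr : IsRetractionalSkeleton r) {s : Γ} {y : Y} :
    y ∈ range (r s) ↔ r s y = y :=
  ⟨by rintro ⟨z, rfl⟩; exact hr.apply_apply s z, fun h => ⟨y, h⟩⟩

theorem apply_eq_self_of_le (hr : IsRetractionalSkeleton r) {s t : Γ} (h : s ≤ t) {y : Y}
    (hy : r s y = y) : r t y = y := by
  rw [← hy, hr.apply_apply_of_le h]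

theorem range_subset_range_of_le (hr : IsRetractionalSkeleton r) {s t : Γ} (h : s ≤ t) :
    range (r s) ⊆ range (r t) :=
  fun _ hy => hr.mem_range_iff.2 (hr.apply_eq_self_of_le h (hr.mem_range_iff.1 hy))

theorem secondCountableTopology_range (hr : IsRetractionalSkeleton r) (s : Γ) :
    SecondCountableTopology (range (r s)) := by
  have := hr.metrizable_range s
  have := isCompact_iff_compactSpace.1 (hr.compact_range s)
  let := metrizableSpaceMetric (range (r s))
  infer_instance

theorem exists_sup_of_monotone [T2Space Y] (hr : IsRetractionalSkeleton r) {c : ℕ → Γ}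
    (hc : Monotone c) :
    ∃ t, (∀ n, c n ≤ t) ∧ (∀ y, Tendsto (fun n => r (c n) y) atTop (𝓝 (r t y))) ∧
      ∀ n y, r (c n) y = y → r t y = y := by
  obtain ⟨t, hlub, htend⟩ := hr.seq_sup c hc
  refine ⟨t, fun n => hlub.1 (mem_range_self n), htend, fun n y hy => ?_⟩
  refine tendsto_nhds_unique (htend y) (tendsto_const_nhds.congr' ?_)
  filter_upwards [eventually_ge_atTop n] with m hm
  exact (hr.apply_eq_self_of_le (hc hm) hy).symm

theorem exists_le_forall_apply_eq_self [T2Space Y] (hr : IsRetractionalSkeleton r)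
    (hfull : ∀ y : Y, ∃ s, y ∈ range (r s)) {P : Set Y} (hP : P.Countable) (s₀ : Γ) :
    ∃ t, s₀ ≤ t ∧ ∀ y ∈ P, r t y = y := by
  rcases P.eq_empty_or_nonempty with rfl | hne
  · exact ⟨s₀, le_rfl, by simp⟩
  obtain ⟨e, rfl⟩ := hP.exists_eq_range hne
  choose i hi using fun n => hfull (e n)
  choose ub hub₁ hub₂ using hr.directed
  let c : ℕ → Γ := fun n => Nat.rec s₀ (fun n cn => ub cn (i n)) n
  have hc : Monotone c := monotone_nat_of_le_succ fun n => hub₁ _ _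
  obtain ⟨t, hct, -, hfix⟩ := hr.exists_sup_of_monotone hc
  refine ⟨t, hct 0, ?_⟩
  rintro _ ⟨n, rfl⟩
  exact hfix (n + 1) _ (hr.apply_eq_self_of_le (hub₂ (c n) (i n)) (hr.mem_range_iff.1 (hi n)))

/-- Compactness of `closure D` gives `f_n ∈ closure D` with `r_{c_n} f_n = r_{c_n} a`; a cluster
point `f` of `(f_n)` then has `r_{c_m} f = r_{c_m} a` for all `m`, so `r_t a = r_t f = f`. -/
theorem apply_mem_closure_of_mem_closure_image [T2Space Y] (hr : IsRetractionalSkeleton r)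
    {c : ℕ → Γ} (hc : Monotone c) {t : Γ}
    (htend : ∀ y, Tendsto (fun n => r (c n) y) atTop (𝓝 (r t y)))
    {D : Set Y} (hD : D ⊆ range (r t)) {a : Y} (ha : ∀ n, r (c n) a ∈ closure (r (c n) '' D)) :
    r t a ∈ closure D := by
  have hDt : closure D ⊆ range (r t) := closure_minimal hD (hr.compact_range t).isClosed
  have hDc : IsCompact (closure D) :=
    (hr.compact_range t).of_isClosed_subset isClosed_closure hDt
  have hf : ∀ n, ∃ f ∈ closure D, r (c n) f = r (c n) a := fun n =>
    closure_minimal (image_mono subset_closure) (hDc.image (hr.continuous _)).isClosed (ha n)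
  choose f hfD hfa using hf
  obtain ⟨z, hzD, hz⟩ :=
    hDc.exists_mapClusterPt (f := atTop) (tendsto_principal.2 (Eventually.of_forall hfD))
  have hza : ∀ m, r (c m) z = r (c m) a := by
    intro m
    refine isClosed_singleton.mem_of_mapClusterPt (hz.continuousAt_comp
      (hr.continuous (c m)).continuousAt) ?_
    filter_upwards [eventually_ge_atTop m] with n hn
    show r (c m) (f n) = r (c m) a
    rw [← hr.apply_apply_of_le' (hc hn) (f n), hfa, hr.apply_apply_of_le' (hc hn)]
  have hrz : r t z = r t a :=
    tendsto_nhds_unique (htend z) (by simpa only [hza] using htend a)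
  rwa [← hrz, hr.mem_range_iff.1 (hDt hzD)]

theorem exists_le_image_subset_closure_countable [T2Space Y] (hr : IsRetractionalSkeleton r)
    (hfull : ∀ y : Y, ∃ s, y ∈ range (r s)) (A : Set Y) (s₀ : Γ) :
    ∃ t, s₀ ≤ t ∧ ∃ C ⊆ A, C.Countable ∧ r t '' A ⊆ closure C := by
  choose C hCA hCc hC using fun s =>
    have := hr.secondCountableTopology_range s
    exists_countable_subset_image_subset_closure_image (f := r s) A
  choose step hstep hfix using fun s => hr.exists_le_forall_apply_eq_self hfull (hCc s) s
  let c : ℕ → Γ := fun n => step^[n] s₀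
  have hcs : ∀ n, c (n + 1) = step (c n) := fun n => Function.iterate_succ_apply' step n s₀
  have hc : Monotone c := monotone_nat_of_le_succ fun n => hcs n ▸ hstep (c n)
  obtain ⟨t, hct, htend, hfix_t⟩ := hr.exists_sup_of_monotone hc
  refine ⟨t, hct 0, ⋃ n, C (c n), iUnion_subset fun n => hCA _,
    countable_iUnion fun n => hCc _, ?_⟩
  rintro _ ⟨a, ha, rfl⟩
  refine hr.apply_mem_closure_of_mem_closure_image hc htend ?_ fun n =>
    closure_mono (image_mono (subset_iUnion (fun n => C (c n)) n)) (hC (c n) ⟨a, ha, rfl⟩)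
  simp only [iUnion_subset_iff]
  exact fun n y hy => hr.mem_range_iff.2 (hfix_t (n + 1) y (hcs n ▸ hfix (c n) y hy))

theorem prodMap (hr : IsRetractionalSkeleton r) :
    IsRetractionalSkeleton fun s => Prod.map (r s) (r s) where
  nonempty := hr.nonempty
  directed := hr.directed
  continuous s := (hr.continuous s).prodMap (hr.continuous s)
  retraction s := by rw [Prod.map_comp_map, hr.retraction]
  compact_range s := by
    rw [range_prodMap]
    exact (hr.compact_range s).prod (hr.compact_range s)
  metrizable_range s := by
    have := hr.metrizable_range s
    rw [range_prodMap]
    exact (Homeomorph.Set.prod _ _).isEmbedding.metrizableSpace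
  comp_eq_of_le s t h := by
    simp only [Prod.map_comp_map, (hr.comp_eq_of_le s t h).1, (hr.comp_eq_of_le s t h).2, and_self]
  seq_sup u hu := by
    obtain ⟨t, hlub, htend⟩ := hr.seq_sup u hu
    exact ⟨t, hlub, fun p => (htend p.1).prodMk_nhds (htend p.2)⟩
  tendsto_id p := (hr.tendsto_id p.1).prodMk_nhds (hr.tendsto_id p.2)

theorem exists_mem_range_prodMap (hr : IsRetractionalSkeleton r)
    (hfull : ∀ y : Y, ∃ s, y ∈ range (r s)) (p : Y × Y) :
    ∃ s, p ∈ range (Prod.map (r s) (r s)) := by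
  obtain ⟨s₁, h₁⟩ := hfull p.1
  obtain ⟨s₂, h₂⟩ := hfull p.2
  obtain ⟨s, hs₁, hs₂⟩ := hr.directed s₁ s₂
  refine ⟨s, ?_⟩
  rw [range_prodMap]
  exact ⟨hr.range_subset_range_of_le hs₁ h₁, hr.range_subset_range_of_le hs₂ h₂⟩

end IsRetractionalSkeleton

section Descend

variable {W X : Type u} {Γ : Type u} {r : Γ → W → W} {g : W → X}

def MapsFibers (g : W → X) (f : W → W) : Prop :=
  ∀ w w', g w = g w' → g (f w) = g (f w')

variable (g) in
noncomputable def descend (hgs : Function.Surjective g) (r : Γ → W → W)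
    (s : {s // MapsFibers g (r s)}) (x : X) : X :=
  g (r s (Function.surjInv hgs x))

theorem descend_apply (hgs : Function.Surjective g) (s : {s // MapsFibers g (r s)}) (w : W) :
    descend g hgs r s (g w) = g (r s w) :=
  s.2 _ _ (Function.surjInv_eq hgs (g w))

theorem range_descend (hgs : Function.Surjective g) (s : {s // MapsFibers g (r s)}) :
    range (descend g hgs r s) = g '' range (r s) := by
  refine (range_subset_iff.2 fun x => mem_image_of_mem g (mem_range_self _)).antisymm ?_
  rintro _ ⟨_, ⟨w, rfl⟩, rfl⟩
  exact ⟨g w, descend_apply hgs s w⟩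

variable [TopologicalSpace W] [TopologicalSpace X] [PartialOrder Γ]

theorem MapsFibers.of_tendsto [T2Space X] (hg : Continuous g) {f : ℕ → W → W} {f' : W → W}
    (hf : ∀ n, MapsFibers g (f n)) (h : ∀ w, Tendsto (fun n => f n w) atTop (𝓝 (f' w))) :
    MapsFibers g f' := fun w w' hw =>
  tendsto_nhds_unique ((hg.tendsto _).comp (h w))
    (by simpa only [Function.comp_def, hf _ w w' hw] using (hg.tendsto _).comp (h w'))

theorem IsRetractionalSkeleton.exists_le_mapsFibers [T2Space W] [T2Space X]
    (hr : IsRetractionalSkeleton r) (hfull : ∀ w : W, ∃ s, w ∈ range (r s)) (hg : Continuous g)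
    (s₀ : Γ) : ∃ t, s₀ ≤ t ∧ MapsFibers g (r t) := by
  let A : Set (W × W) := {p | g p.1 = g p.2}
  have hA : IsClosed A := isClosed_eq (hg.comp continuous_fst) (hg.comp continuous_snd)
  obtain ⟨t, hst, C, hCA, -, hC⟩ := hr.prodMap.exists_le_image_subset_closure_countable
    (hr.exists_mem_range_prodMap hfull) A s₀
  exact ⟨t, hst, fun w w' hw => closure_minimal hCA hA (hC ⟨(w, w'), hw, rfl⟩)⟩

theorem isRetractionalSkeleton_descend [T2Space X] (hr : IsRetractionalSkeleton r)
    (hgs : Function.Surjective g) (hg : Continuous g) (hgcl : IsClosedMap g)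
    (hcof : ∀ s, ∃ t, s ≤ t ∧ MapsFibers g (r t)) :
    IsRetractionalSkeleton (descend g hgs r) where
  nonempty := let ⟨t, _, ht⟩ := hcof hr.nonempty.some; ⟨⟨t, ht⟩⟩
  directed a b := by
    obtain ⟨c, hac, hbc⟩ := hr.directed a b
    obtain ⟨t, hct, ht⟩ := hcof c
    exact ⟨⟨t, ht⟩, hac.trans hct, hbc.trans hct⟩
  continuous s := by
    have hs : descend g hgs r s ∘ g = g ∘ r s := funext (descend_apply hgs s)
    rw [(hgcl.isQuotientMap hg hgs).continuous_iff, hs]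
    exact hg.comp (hr.continuous s)
  retraction s := by
    funext x
    obtain ⟨w, rfl⟩ := hgs x
    simp only [Function.comp_apply, descend_apply, hr.apply_apply]
  compact_range s := by
    rw [range_descend]
    exact (hr.compact_range s).image hg
  metrizable_range s := by
    have := hr.metrizable_range s
    rw [range_descend]
    exact (hr.compact_range s).metrizableSpace_image hg
  comp_eq_of_le s t h := by
    constructor <;> funext x <;> obtain ⟨w, rfl⟩ := hgs x <;>
      simp only [Function.comp_apply, descend_apply, hr.apply_apply_of_le h,
        hr.apply_apply_of_le' h]
  seq_sup u hu := by
    obtain ⟨t, hlub, htend⟩ := hr.seq_sup (fun n => (u n).1) hu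
    refine ⟨⟨t, MapsFibers.of_tendsto hg (fun n => (u n).2) htend⟩,
      ⟨?_, fun b hb => hlub.2 ?_⟩, fun x => (hg.tendsto _).comp (htend _)⟩
    · rintro _ ⟨n, rfl⟩
      exact hlub.1 ⟨n, rfl⟩
    · rintro _ ⟨n, rfl⟩
      exact hb ⟨n, rfl⟩
  tendsto_id x := by
    obtain ⟨w, rfl⟩ := hgs x
    have hval : Tendsto (Subtype.val : {s // MapsFibers g (r s)} → Γ) atTop atTop :=
      tendsto_atTop_atTop_of_monotone (fun _ _ h => h)
        fun s => let ⟨t, hst, ht⟩ := hcof s; ⟨⟨t, ht⟩, hst⟩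
    simpa only [descend_apply, Function.comp_def] using
      (hg.tendsto w).comp ((hr.tendsto_id w).comp hval)

end Descend

theorem HasFullRetractionalSkeleton.hasCountableTightness {Y : Type u} [TopologicalSpace Y]
    [T2Space Y] (h : HasFullRetractionalSkeleton Y) : HasCountableTightness Y := by
  obtain ⟨Γ, _, r, hr, hfull⟩ := h
  intro A x hx
  obtain ⟨s₀, hs₀⟩ := hfull x
  obtain ⟨t, hst, C, hCA, hCc, hC⟩ := hr.exists_le_image_subset_closure_countable hfull A s₀
  have hxt : r t x = x := hr.apply_eq_self_of_le hst (hr.mem_range_iff.1 hs₀)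
  refine ⟨C, hCA, hCc, closure_minimal hC isClosed_closure ?_⟩
  rw [← hxt]
  exact image_closure_subset_closure_image (hr.continuous t) (mem_image_of_mem _ hx)

theorem HasFullRetractionalSkeleton.exists_isCompact_metrizable_superset {W : Type u} {X : Type*}
    [TopologicalSpace W] [TopologicalSpace X] [T2Space W] [T2Space X]
    (h : HasFullRetractionalSkeleton W) {g : W → X} (hg : Continuous g)
    (hgs : Function.Surjective g) {C : Set X} (hC : C.Countable) :
    ∃ K, C ⊆ K ∧ IsCompact K ∧ MetrizableSpace K := by
  obtain ⟨Γ, _, r, hr, hfull⟩ := h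
  obtain ⟨t, -, ht⟩ := hr.exists_le_forall_apply_eq_self hfull
    (hC.image (Function.surjInv hgs)) hr.nonempty.some
  have := hr.metrizable_range t
  refine ⟨g '' range (r t), fun x hx => ⟨_, ⟨_, ht _ (mem_image_of_mem _ hx)⟩,
    Function.surjInv_eq hgs x⟩, (hr.compact_range t).image hg,
    (hr.compact_range t).metrizableSpace_image hg⟩

theorem HasFullRetractionalSkeleton.of_isClosedMap {W X : Type u} [TopologicalSpace W]
    [TopologicalSpace X] [T2Space W] [T2Space X] (h : HasFullRetractionalSkeleton W) {g : W → X}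
    (hg : Continuous g) (hgs : Function.Surjective g) (hgcl : IsClosedMap g) :
    HasFullRetractionalSkeleton X := by
  obtain ⟨Γ, _, r, hr, hfull⟩ := h
  have hcof := fun s => hr.exists_le_mapsFibers hfull hg s
  refine ⟨_, inferInstance, descend g hgs r, isRetractionalSkeleton_descend hr hgs hg hgcl hcof,
    fun x => ?_⟩
  obtain ⟨w, rfl⟩ := hgs x
  obtain ⟨s, hs⟩ := hfull w
  obtain ⟨t, hst, ht⟩ := hcof s
  exact ⟨⟨t, ht⟩, g w, by rw [descend_apply, hr.apply_eq_self_of_le hst (hr.mem_range_iff.1 hs)]⟩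

theorem ncCorson_tfae_of_weaklyNCCorson_general
    {X : Type u} [TopologicalSpace X] [T2Space X]
    (hX : IsWeaklyNCCorson X) :
    List.TFAE [HasFullRetractionalSkeleton X,
      FrechetUrysohnSpace X,
      ∀ A : Set X, ∀ x ∈ closure A, ∃ C ⊆ A, C.Countable ∧ x ∈ closure C] := by
  obtain ⟨-, W, _, _, -, ⟨hWcc, hW⟩, g, hg, hgs⟩ := hX
  tfae_have 1 → 3 := HasFullRetractionalSkeleton.hasCountableTightness
  tfae_have 2 → 3 := fun _ => FrechetUrysohnSpace.hasCountableTightness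
  tfae_have 3 → 2 := fun h => HasCountableTightness.frechetUrysohnSpace h
    fun _ hC => hW.exists_isCompact_metrizable_superset hg hgs hC
  tfae_have 2 → 1 := fun _ => hW.of_isClosedMap hg hgs (hWcc.isClosedMap hg)
  tfae_finish

/-- For a weakly non-commutative Corson countably compact space `X`,
the following are equivalent: `X` admits a full retractional skeleton, `X` is
Fréchet–Urysohn, and `X` has countable tightness. -/
theorem ncCorson_tfae_of_weaklyNCCorson
    {X : Type u} [TopologicalSpace X] [T2Space X] [CompletelyRegularSpace X]
    (hX : IsWeaklyNCCorson X) :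
    List.TFAE [HasFullRetractionalSkeleton X,
      FrechetUrysohnSpace X,
      ∀ A : Set X, ∀ x ∈ closure A, ∃ C ⊆ A, C.Countable ∧ x ∈ closure C] :=
  ncCorson_tfae_of_weaklyNCCorson_general hX
end

section
/- Let η be an ordinal. The compact ordinal interval [0,η] with the order topology admits a full retractional skeleton (i.e., is non-commutative Corson) if and only if η < ω₁, the first uncountable ordinal. -/
open Filter Topology Set

universe u

/-!
The countable case is trivial: `[0, η]` is then compact metrizable, and the identity alone is a
full skeleton. For `ω₁ ≤ η` the point `ω₁` is not the limit of any nontrivial sequence, so it is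
isolated in every metrizable retract containing it, and each `r_s` with `ω₁` in its range
collapses a whole interval `(β_s, ω₁]` onto `ω₁`. Since successor ordinals are isolated, a
countable chain `t_n` can be chosen so that `r_T` fixes `β_{t_n} + 1` for `T = sup t_n`; the
supremum `A < ω₁` of these points then lies in the closed range of `r_T`, so `r_T A = A`, while
`r_T A = lim r_{t_n} A = ω₁`.
-/

open Ordinal

section SequentiallyIsolated

variable {X : Type*} [TopologicalSpace X]

def IsSeqIsolated (x : X) : Prop :=
  ∀ y : ℕ → X, Tendsto y atTop (𝓝 x) → ∀ᶠ n in atTop, y n = x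

theorem IsSeqIsolated.subtype {s : Set X} {x : s} (hx : IsSeqIsolated (x : X)) :
    IsSeqIsolated x := fun _ hy =>
  (hx _ (continuous_subtype_val.continuousAt.tendsto.comp hy)).mono fun _ => Subtype.ext

theorem IsSeqIsolated.isOpen_singleton [SequentialSpace X] {x : X} (hx : IsSeqIsolated x) :
    IsOpen {x} := by
  refine isClosed_compl_iff.mp (IsSeqClosed.isClosed fun y z hy hyz hzx => ?_)
  obtain ⟨n, hn⟩ := (hx y (hzx ▸ hyz)).exists
  exact hy n hn

theorem IsSeqIsolated.eventually_apply_eq {f : X → X} (hf : Continuous f)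
    [SequentialSpace (range f)] {p : X} (hp : IsSeqIsolated p) (hfp : f p = p) :
    ∀ᶠ x in 𝓝 p, f x = p := by
  have hiso : IsOpen {(⟨p, p, hfp⟩ : range f)} := (IsSeqIsolated.subtype hp).isOpen_singleton
  exact mem_of_superset ((hiso.preimage hf.rangeFactorization).mem_nhds (Subtype.ext hfp))
    fun _ hx => congrArg Subtype.val hx

end SequentiallyIsolated

theorem Ordinal.isSeqIsolated_omega_one : IsSeqIsolated (ω₁ : Ordinal.{u}) := by
  intro y hy
  set g : ℕ → Ordinal.{u} := fun n => if y n < ω₁ then y n else 0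
  have hδ : ⨆ n, g n < ω₁ := iSup_lt_omega_one fun n => by
    simp only [g]; split_ifs with h
    exacts [h, omega_pos 1]
  filter_upwards [hy.eventually (isOpen_Ioo.mem_nhds ⟨hδ, Order.lt_succ ω₁⟩)] with n ⟨hδn, hn⟩
  refine le_antisymm (Order.lt_succ_iff.mp hn) (not_lt.mp fun h => hδn.not_ge ?_)
  calc y n = g n := (if_pos h).symm
    _ ≤ ⨆ n, g n := le_ciSup bddAbove_of_small n

theorem Ordinal.countable_Iic_of_lt_omega_one {η : Ordinal.{u}} (hη : η < ω₁) :
    (Iic η).Countable := by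
  rw [← Order.Iio_succ, ← Cardinal.le_aleph0_iff_set_countable, Cardinal.mk_Iio_ordinal,
    Cardinal.lift_le_aleph0, ← Cardinal.lt_aleph_one_iff, ← Cardinal.lt_ord, Cardinal.ord_aleph]
  exact (Cardinal.isSuccLimit_omega 1).succ_lt hη

theorem Ordinal.isOpen_singleton_succ_Iic {η : Ordinal.{u}} (β : Ordinal.{u})
    (hβ : Order.succ β ≤ η) : IsOpen {(⟨Order.succ β, hβ⟩ : Iic η)} := by
  convert (SuccOrder.isOpen_singleton_iff.mpr (Order.not_isSuccLimit_succ β)).preimage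
    (continuous_subtype_val (p := (· ∈ Iic η)))
  ext
  simp [Subtype.ext_iff]

theorem hasFullRetractionalSkeleton_of_compact_metrizable (X : Type u) [TopologicalSpace X]
    [CompactSpace X] [TopologicalSpace.MetrizableSpace X] : HasFullRetractionalSkeleton X := by
  refine ⟨PUnit, inferInstance, fun _ => id, ⟨?_, ?_, ?_, ?_, ?_, ?_, ?_, ?_, ?_⟩,
      fun x => ⟨PUnit.unit, x, rfl⟩⟩
  · exact ⟨PUnit.unit⟩
  · exact fun _ _ => ⟨PUnit.unit, le_rfl, le_rfl⟩
  · exact fun _ => continuous_id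
  · exact fun _ => rfl
  · exact fun _ => range_id ▸ isCompact_univ
  · exact fun _ => inferInstance
  · exact fun _ _ _ => ⟨rfl, rfl⟩
  · exact fun _ _ => ⟨PUnit.unit, ⟨fun _ _ => le_rfl, fun _ _ => le_rfl⟩,
      fun _ => tendsto_const_nhds⟩
  · exact fun _ => tendsto_const_nhds

namespace IsRetractionalSkeleton

variable {X : Type u} [TopologicalSpace X] {Γ : Type u} [PartialOrder Γ] {r : Γ → X → X}

theorem apply_eq_self_iff (hr : IsRetractionalSkeleton r) {s : Γ} {x : X} :
    r s x = x ↔ x ∈ range (r s) :=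
  ⟨fun h => ⟨x, h⟩, by rintro ⟨y, rfl⟩; exact congrFun (hr.retraction s) y⟩

theorem range_mono (hr : IsRetractionalSkeleton r) {s t : Γ} (hst : s ≤ t) :
    range (r s) ⊆ range (r t) := by
  rintro _ ⟨y, rfl⟩
  exact ⟨r s y, congrFun (hr.comp_eq_of_le s t hst).1 y⟩

theorem exists_seq_fixing (hr : IsRetractionalSkeleton r) (a : Γ → X)
    (ha : ∀ s, IsOpen {a s}) (s₀ : Γ) :
    ∃ (t : ℕ → Γ) (T : Γ), (∀ n, s₀ ≤ t n) ∧
      (∀ x, Tendsto (fun n => r (t n) x) atTop (𝓝 (r T x))) ∧ ∀ n, a (t n) ∈ range (r T) := by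
  have := hr.nonempty
  have : IsDirected Γ (· ≤ ·) := ⟨hr.directed⟩
  have hnext (s : Γ) : ∃ s', s ≤ s' ∧ ∀ v, s' ≤ v → r v (a s) = a s := by
    obtain ⟨s', hs'⟩ := ((eventually_ge_atTop s).and
      ((hr.tendsto_id (a s)).eventually ((ha s).mem_nhds rfl))).exists_forall_of_atTop
    exact ⟨s', (hs' s' le_rfl).1, fun v hv => (hs' v hv).2⟩
  choose next hle_next hfix_next using hnext
  set t : ℕ → Γ := fun n => next^[n] s₀
  have ht_succ (n : ℕ) : t (n + 1) = next (t n) := Function.iterate_succ_apply' next n s₀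
  have ht_mono : Monotone t := monotone_nat_of_le_succ fun n => ht_succ n ▸ hle_next (t n)
  obtain ⟨T, hT, hlim⟩ := hr.seq_sup t ht_mono
  refine ⟨t, T, fun n => ht_mono (Nat.zero_le n), hlim, fun n => ⟨a (t n), ?_⟩⟩
  exact hfix_next (t n) T (ht_succ n ▸ hT.1 ⟨n + 1, rfl⟩)

end IsRetractionalSkeleton

theorem Ordinal.not_hasFullRetractionalSkeleton_Iic {η : Ordinal.{u}} (hη : ω₁ ≤ η) :
    ¬ HasFullRetractionalSkeleton (Iic η) := by
  rintro ⟨Γ, _, r, hr, hfull⟩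
  set Ω : Iic η := ⟨ω₁, hη⟩
  obtain ⟨s₀, hs₀⟩ := hfull Ω
  have collapse (s : Γ) :
      ∃ β < ω₁, s₀ ≤ s → ∀ x : Iic η, β < x → (x : Ordinal) ≤ ω₁ → r s x = Ω := by
    by_cases hs : s₀ ≤ s
    · have := hr.metrizable_range s
      have hev := (IsSeqIsolated.subtype (x := Ω) isSeqIsolated_omega_one).eventually_apply_eq
        (hr.continuous s) (hr.apply_eq_self_iff.mpr (hr.range_mono hs hs₀))
      have h0 : (⟨0, mem_Iic.mpr zero_le⟩ : Iic η) < Ω := omega_pos 1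
      obtain ⟨l, hl, hsub⟩ := exists_Ioc_subset_of_mem_nhds hev ⟨_, h0⟩
      exact ⟨l, hl, fun _ x h1 h2 => hsub ⟨h1, h2⟩⟩
    · exact ⟨0, omega_pos 1, fun h => absurd h hs⟩
  choose β hβ hcollapse using collapse
  have hsucc (s : Γ) : Order.succ (β s) < ω₁ := (Cardinal.isSuccLimit_omega 1).succ_lt (hβ s)
  set a : Γ → Iic η := fun s => ⟨Order.succ (β s), (hsucc s).le.trans hη⟩
  obtain ⟨t, T, ht, hlim, hfix⟩ :=
    hr.exists_seq_fixing a (fun s => isOpen_singleton_succ_Iic _ _) s₀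
  set A := ⨆ n, (a (t n) : Ordinal)
  have hA : A < ω₁ := iSup_lt_omega_one fun n => hsucc (t n)
  have hβA (n : ℕ) : β (t n) < A := (Order.lt_succ _).trans_le (le_ciSup bddAbove_of_small n)
  have hAT : A ∈ Subtype.val '' range (r T) :=
    closure_minimal (s := range fun n => (a (t n) : Ordinal))
      (range_subset_iff.2 fun n => mem_image_of_mem _ (hfix n))
      ((hr.compact_range T).image continuous_subtype_val).isClosed
      (csSup_mem_closure (range_nonempty _) bddAbove_of_small)
  obtain ⟨x, hxT, hxA⟩ := hAT
  have hTx : r T x = Ω := tendsto_nhds_unique (hlim x) (tendsto_const_nhds.congr fun n =>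
    (hcollapse (t n) (ht n) x (hxA ▸ hβA n :) (hxA ▸ hA.le :)).symm)
  exact hA.ne (hxA ▸ congrArg Subtype.val ((hr.apply_eq_self_iff.mpr hxT).symm.trans hTx))

/-- The ordinal interval `[0, η]` admits a full retractional skeleton iff
`η < ω₁`. -/
theorem ordinalInterval_fullSkeleton_iff
    (η : Ordinal.{u}) :
    HasFullRetractionalSkeleton ↥(Set.Iic η) ↔ η < Ordinal.omega 1 := by
  refine ⟨fun h => not_le.mp fun hη => not_hasFullRetractionalSkeleton_Iic hη h, fun hη => ?_⟩
  have : Countable (Iic η) := (countable_Iic_of_lt_omega_one hη).to_subtype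
  have : CompactSpace (Iic η) := isCompact_iff_compactSpace.mp (Icc_bot (a := η) ▸ isCompact_Icc)
  exact hasFullRetractionalSkeleton_of_compact_metrizable _
end

section
/- For every ordinal η, the compact ordinal interval [0,η] with the order topology admits a retractional skeleton (i.e., [0,η] is a non-commutative Valdivia compact space). -/
open Filter Topology Set

universe u

/-!
Index the skeleton by the countable closed sets `A` of ordinals that contain `0` and in which
every limit element is a supremum of smaller elements, ordered by inclusion, and let `r_A` send
`x` to the largest element of `A` below `x`. The condition at limits is exactly what makes `r_A`
continuous; its range is the countable compact set `A ∩ [0, η]`, hence metrizable. The supremum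
of an increasing sequence `A n` is `closure (⋃ n, A n)`, still countable because the closure of a
countable set of ordinals only adds suprema of its initial segments, and `r_A x` increases to
`r_{⋃ A n} x`. Finally `r_A x → x` because eventually `A` contains any successor `b + 1 ≤ x`.
-/

open Order

theorem TopologicalSpace.metrizableSpace_of_countable_of_compactSpace (X : Type*)
    [TopologicalSpace X] [CompactSpace X] [T2Space X] [Countable X] :
    TopologicalSpace.MetrizableSpace X := by
  have hsep : ∀ p : X × X, ∃ g : X → ℝ, Continuous g ∧ (p.1 ≠ p.2 → g p.1 ≠ g p.2) := by
    rintro ⟨x, y⟩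
    by_cases hxy : x = y
    · exact ⟨0, continuous_const, fun h => (h hxy).elim⟩
    obtain ⟨g, hgx, hgy, -⟩ := exists_continuous_zero_one_of_isClosed isClosed_singleton
      isClosed_singleton (disjoint_singleton.2 hxy)
    exact ⟨g, g.continuous, fun _ => by simp [hgx rfl, hgy rfl]⟩
  choose g hg_cont hg_sep using hsep
  have := Encodable.ofCountable (X × X)
  exact Metric.PiNatEmbed.TopologicalSpace.MetrizableSpace.of_countable_separating g hg_cont
    fun x y hxy => ⟨(x, y), hg_sep _ hxy⟩

namespace Ordinal

theorem sSup_inter_Iic_of_mem_closure {S : Set Ordinal.{u}} {a : Ordinal.{u}}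
    (ha : a ∈ closure S) : (S ∩ Iic a).Nonempty ∧ sSup (S ∩ Iic a) = a :=
  (mem_closure_tfae a S).out 0 2 |>.1 ha

theorem countable_closure {S : Set Ordinal.{u}} (hS : S.Countable) : (closure S).Countable := by
  refine ((hS.image fun s => sSup (S ∩ Iio s)).insert (sSup S)).mono fun a ha => ?_
  have ha_eq : sSup (S ∩ Iic a) = a := (sSup_inter_Iic_of_mem_closure ha).2
  by_cases habove : (S ∩ Ioi a).Nonempty
  · obtain ⟨hsS, has⟩ : sInf (S ∩ Ioi a) ∈ S ∩ Ioi a := csInf_mem habove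
    have hcut : S ∩ Iio (sInf (S ∩ Ioi a)) = S ∩ Iic a := by
      ext t
      refine and_congr_right fun htS => ⟨fun hts => mem_Iic.2 (not_lt.1 fun hat => ?_),
        fun hta => (mem_Iic.1 hta).trans_lt has⟩
      exact (mem_Iio.1 hts).not_ge (csInf_le' ⟨htS, hat⟩)
    exact mem_insert_of_mem _ ⟨_, hsS, by simp only [hcut, ha_eq]⟩
  · have hS_le : S ∩ Iic a = S :=
      inter_eq_left.2 fun s hs => mem_Iic.2 (not_lt.1 fun h => habove ⟨s, hs, h⟩)
    rw [hS_le] at ha_eq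
    exact ha_eq ▸ mem_insert _ _

def CofinalAtLimits (A : Set Ordinal.{u}) : Prop :=
  ∀ a ∈ A, IsSuccLimit a → ∀ b < a, ∃ c ∈ A, b < c ∧ c < a

theorem CofinalAtLimits.iUnion {ι : Sort*} {A : ι → Set Ordinal.{u}}
    (hA : ∀ i, CofinalAtLimits (A i)) : CofinalAtLimits (⋃ i, A i) := by
  intro a ha hlim b hb
  obtain ⟨i, hai⟩ := mem_iUnion.1 ha
  obtain ⟨c, hc, hbc, hca⟩ := hA i a hai hlim b hb
  exact ⟨c, mem_iUnion.2 ⟨i, hc⟩, hbc, hca⟩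

theorem CofinalAtLimits.closure {S : Set Ordinal.{u}} (hS : CofinalAtLimits S) :
    CofinalAtLimits (closure S) := by
  intro a ha hlim b hb
  obtain ⟨hne, ha_eq⟩ := sSup_inter_Iic_of_mem_closure ha
  obtain ⟨c, ⟨hcS, hca⟩, hbc⟩ := exists_lt_of_lt_csSup hne (ha_eq ▸ hb)
  rcases (mem_Iic.1 hca).lt_or_eq with hca | rfl
  · exact ⟨c, subset_closure hcS, hbc, hca⟩
  · obtain ⟨d, hdS, hbd, hdc⟩ := hS c hcS hlim b hb
    exact ⟨d, subset_closure hdS, hbd, hdc⟩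

structure IsAdmissible (A : Set Ordinal.{u}) : Prop where
  countable : A.Countable
  isClosed : IsClosed A
  zero_mem : 0 ∈ A
  cofinalAtLimits : CofinalAtLimits A

theorem isAdmissible_pair {a : Ordinal.{u}} (ha : ¬IsSuccLimit a) : IsAdmissible {0, a} where
  countable := (countable_singleton a).insert 0
  isClosed := ((finite_singleton a).insert 0).isClosed
  zero_mem := mem_insert 0 _
  cofinalAtLimits := by
    rintro b (rfl | rfl) hlim
    exacts [(not_isSuccLimit_bot hlim).elim, (ha hlim).elim]

theorem IsAdmissible.union {A B : Set Ordinal.{u}} (hA : IsAdmissible A) (hB : IsAdmissible B) :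
    IsAdmissible (A ∪ B) where
  countable := hA.countable.union hB.countable
  isClosed := hA.isClosed.union hB.isClosed
  zero_mem := Or.inl hA.zero_mem
  cofinalAtLimits := union_eq_iUnion ▸ CofinalAtLimits.iUnion (Bool.forall_bool.2
    ⟨hB.cofinalAtLimits, hA.cofinalAtLimits⟩)

theorem IsAdmissible.closure_iUnion {A : ℕ → Set Ordinal.{u}} (hA : ∀ n, IsAdmissible (A n)) :
    IsAdmissible (closure (⋃ n, A n)) where
  countable := countable_closure (countable_iUnion fun n => (hA n).countable)
  isClosed := isClosed_closure
  zero_mem := subset_closure (mem_iUnion.2 ⟨0, (hA 0).zero_mem⟩)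
  cofinalAtLimits := (CofinalAtLimits.iUnion fun n => (hA n).cofinalAtLimits).closure

noncomputable def floorIn (A : Set Ordinal.{u}) (x : Ordinal.{u}) : Ordinal.{u} :=
  sSup (A ∩ Iic x)

section floorIn

variable {A B : Set Ordinal.{u}} {x y : Ordinal.{u}}

theorem floorIn_le (A : Set Ordinal.{u}) (x : Ordinal.{u}) : floorIn A x ≤ x :=
  csSup_le' fun _ hy => hy.2

theorem le_floorIn (hy : y ∈ A) (hyx : y ≤ x) : y ≤ floorIn A x :=
  le_csSup (bddAbove_Iic.mono inter_subset_right) ⟨hy, hyx⟩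

theorem floorIn_mem (hA : IsClosed A) (h0 : 0 ∈ A) (x : Ordinal.{u}) : floorIn A x ∈ A :=
  ((hA.inter isClosed_Iic).csSup_mem ⟨0, h0, mem_Iic.2 zero_le⟩
    (bddAbove_Iic.mono inter_subset_right)).1

theorem floorIn_of_mem (hx : x ∈ A) : floorIn A x = x :=
  (floorIn_le A x).antisymm (le_floorIn hx le_rfl)

theorem floorIn_mono_right (A : Set Ordinal.{u}) (hxy : x ≤ y) : floorIn A x ≤ floorIn A y :=
  csSup_le_csSup' (bddAbove_Iic.mono inter_subset_right)
    (inter_subset_inter_right A (Iic_subset_Iic.2 hxy))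

theorem floorIn_mono_left (hAB : A ⊆ B) (x : Ordinal.{u}) : floorIn A x ≤ floorIn B x :=
  csSup_le_csSup' (bddAbove_Iic.mono inter_subset_right) (inter_subset_inter_left _ hAB)

theorem floorIn_floorIn_of_subset (hA : IsClosed A) (h0 : 0 ∈ A) (hAB : A ⊆ B)
    (x : Ordinal.{u}) : floorIn B (floorIn A x) = floorIn A x :=
  floorIn_of_mem (hAB (floorIn_mem hA h0 x))

theorem floorIn_floorIn_of_superset (hA : IsClosed A) (h0 : 0 ∈ A) (hAB : A ⊆ B)
    (x : Ordinal.{u}) : floorIn A (floorIn B x) = floorIn A x :=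
  (floorIn_mono_right A (floorIn_le B x)).antisymm
    (le_floorIn (floorIn_mem hA h0 x) (floorIn_mono_left hAB x))

theorem floorIn_closure (S : Set Ordinal.{u}) (x : Ordinal.{u}) :
    floorIn (closure S) x = floorIn S x := by
  refine (csSup_le' fun c (hc : c ∈ closure S ∩ Iic x) => ?_).antisymm
    (floorIn_mono_left subset_closure x)
  obtain ⟨hne, hc_eq⟩ := sSup_inter_Iic_of_mem_closure hc.1
  exact hc_eq ▸ csSup_le hne fun d hd => le_floorIn hd.1 (hd.2.trans hc.2)

theorem tendsto_floorIn_iUnion {A : ℕ → Set Ordinal.{u}} (hA : Monotone A) (x : Ordinal.{u}) :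
    Tendsto (fun n => floorIn (A n) x) atTop (𝓝 (floorIn (⋃ n, A n) x)) := by
  have hbdd : BddAbove (range fun n => floorIn (A n) x) :=
    ⟨x, forall_mem_range.2 fun n => floorIn_le (A n) x⟩
  have hsup : floorIn (⋃ n, A n) x = ⨆ n, floorIn (A n) x := by
    refine (csSup_le' fun y (hy : y ∈ (⋃ n, A n) ∩ Iic x) => ?_).antisymm
      (ciSup_le fun n => floorIn_mono_left (subset_iUnion A n) x)
    obtain ⟨n, hyn⟩ := mem_iUnion.1 hy.1
    exact (le_floorIn hyn hy.2).trans (le_ciSup hbdd n)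
  exact hsup ▸ tendsto_atTop_ciSup (fun m n hmn => floorIn_mono_left (hA hmn) x) hbdd

theorem continuous_floorIn (hA : IsClosed A) (h0 : 0 ∈ A) (hcof : CofinalAtLimits A) :
    Continuous (floorIn A) := by
  refine continuous_iff_continuousAt.2 fun x => ?_
  by_cases hx : IsSuccLimit x
  swap
  · rw [ContinuousAt, SuccOrder.nhds_eq_pure.2 hx]
    exact tendsto_pure_nhds _ x
  have hbasis := SuccOrder.hasBasis_nhds_Ioc_of_exists_lt ⟨0, hx.bot_lt⟩
  rcases (floorIn_le A x).lt_or_eq with hlt | hfix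
  · -- `A` has no point in `(floorIn A x, x]`, so `floorIn A` is constant there
    refine (continuousAt_const (y := floorIn A x)).congr ?_
    filter_upwards [hbasis.mem_of_mem hlt] with y hy
    exact (le_floorIn (floorIn_mem hA h0 x) hy.1.le).antisymm (floorIn_mono_right A hy.2)
  · rw [ContinuousAt, hfix, hbasis.tendsto_iff hbasis]
    intro b hb
    obtain ⟨c, hcA, hbc, hcx⟩ := hcof x (hfix ▸ floorIn_mem hA h0 x) hx b hb
    exact ⟨c, hcx, fun y hy =>
      ⟨hbc.trans_le (le_floorIn hcA hy.1.le), (floorIn_le A y).trans hy.2⟩⟩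

end floorIn

abbrev AdmissibleSet : Type (u + 1) := {A : Set Ordinal.{u} // IsAdmissible A}

instance : Nonempty AdmissibleSet.{u} := ⟨⟨{0, 0}, isAdmissible_pair not_isSuccLimit_bot⟩⟩

theorem AdmissibleSet.exists_ge_ge (A B : AdmissibleSet.{u}) : ∃ C, A ≤ C ∧ B ≤ C :=
  ⟨⟨A.1 ∪ B.1, A.2.union B.2⟩, subset_union_left, subset_union_right⟩

theorem AdmissibleSet.isLUB_closure_iUnion (A : ℕ → AdmissibleSet.{u}) :
    IsLUB (range A) ⟨closure (⋃ n, (A n).1), IsAdmissible.closure_iUnion fun n => (A n).2⟩ :=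
  ⟨forall_mem_range.2 fun n => (subset_iUnion (fun n => (A n).1) n).trans subset_closure,
    fun B hB => closure_minimal (iUnion_subset fun n => hB ⟨n, rfl⟩) B.2.isClosed⟩

theorem tendsto_floorIn_atTop (x : Ordinal.{u}) :
    Tendsto (fun A : AdmissibleSet.{u} => floorIn A.1 x) atTop (𝓝 x) := by
  refine tendsto_order.2 ⟨fun b hb => ?_,
    fun b hb => Eventually.of_forall fun A => (floorIn_le A.1 x).trans_lt hb⟩
  filter_upwards [eventually_ge_atTop ⟨{0, succ b}, isAdmissible_pair (not_isSuccLimit_succ b)⟩]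
    with A hA
  exact (lt_succ b).trans_le (le_floorIn (hA (mem_insert_of_mem _ rfl)) (succ_le_of_lt hb))

variable (η : Ordinal.{u})

instance : CompactSpace (Iic η) :=
  isCompact_iff_compactSpace.1 (Icc_bot (a := η) ▸ isCompact_Icc)

noncomputable def floorInIic (A : Set Ordinal.{u}) (x : Iic η) : Iic η :=
  ⟨floorIn A x, (floorIn_le A x).trans x.2⟩

variable {η} {A B : Set Ordinal.{u}}

theorem continuous_floorInIic (hA : IsAdmissible A) : Continuous (floorInIic η A) :=
  ((continuous_floorIn hA.isClosed hA.zero_mem hA.cofinalAtLimits).comp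
    continuous_subtype_val).subtype_mk _

theorem range_floorInIic (hA : IsClosed A) (h0 : 0 ∈ A) :
    range (floorInIic η A) = Subtype.val ⁻¹' A := by
  refine Subset.antisymm (range_subset_iff.2 fun x => floorIn_mem hA h0 x) fun x hx => ?_
  exact ⟨x, Subtype.ext (floorIn_of_mem hx)⟩

theorem metrizableSpace_range_floorInIic (hA : IsAdmissible A) :
    TopologicalSpace.MetrizableSpace (range (floorInIic η A)) := by
  have := isCompact_iff_compactSpace.1 (isCompact_range (continuous_floorInIic (η := η) hA))
  have : Countable (range (floorInIic η A)) := by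
    rw [range_floorInIic hA.isClosed hA.zero_mem]
    exact (hA.countable.preimage Subtype.val_injective).to_subtype
  exact TopologicalSpace.metrizableSpace_of_countable_of_compactSpace _

theorem floorInIic_comp_of_subset (hA : IsClosed A) (h0 : 0 ∈ A) (hAB : A ⊆ B) :
    floorInIic η B ∘ floorInIic η A = floorInIic η A ∧
      floorInIic η A ∘ floorInIic η B = floorInIic η A :=
  ⟨funext fun x => Subtype.ext (floorIn_floorIn_of_subset hA h0 hAB x),
    funext fun x => Subtype.ext (floorIn_floorIn_of_superset hA h0 hAB x)⟩

theorem tendsto_floorInIic_closure_iUnion {A : ℕ → Set Ordinal.{u}} (hA : Monotone A)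
    (x : Iic η) :
    Tendsto (fun n => floorInIic η (A n) x) atTop (𝓝 (floorInIic η (closure (⋃ n, A n)) x)) := by
  rw [IsEmbedding.subtypeVal.tendsto_nhds_iff]
  simpa only [Function.comp_def, floorInIic, floorIn_closure] using tendsto_floorIn_iUnion hA x

theorem tendsto_floorInIic_atTop (x : Iic η) :
    Tendsto (fun A : AdmissibleSet.{u} => floorInIic η A.1 x) atTop (𝓝 x) :=
  IsEmbedding.subtypeVal.tendsto_nhds_iff.2 (tendsto_floorIn_atTop x)

end Ordinal

open Ordinal in
/-- Every compact ordinal interval `[0, η]` admits a retractional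
skeleton. -/
theorem ordinalInterval_hasRetractionalSkeleton (η : Ordinal.{u}) :
    HasRetractionalSkeleton ↥(Set.Iic η) :=
  ⟨AdmissibleSet.{u}, inferInstance, fun A => floorInIic η A.1,
    { nonempty := inferInstance
      directed := AdmissibleSet.exists_ge_ge
      continuous := fun A => continuous_floorInIic A.2
      retraction := fun A => (floorInIic_comp_of_subset A.2.isClosed A.2.zero_mem subset_rfl).1
      compact_range := fun A => isCompact_range (continuous_floorInIic A.2)
      metrizable_range := fun A => metrizableSpace_range_floorInIic A.2
      comp_eq_of_le := fun A _ hAB => floorInIic_comp_of_subset A.2.isClosed A.2.zero_mem hAB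
      seq_sup := fun A hA => ⟨_, AdmissibleSet.isLUB_closure_iUnion A,
        tendsto_floorInIic_closure_iUnion fun _ _ hmn => hA hmn⟩
      tendsto_id := tendsto_floorInIic_atTop }⟩
end
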